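/- arXiv:1702.03967 — 3 statements merged into one kernel-verified Lean document; each statement's English description precedes it below -/
import Mathlib

section
/- Kalman gain optimality: among all linear estimators x̂ = x̂⁻ + K(z − H x̂⁻), the choice K = P⁻H^T (H P⁻ H^T + R)^{-1} minimizes the trace of the posterior error covariance (I − KH) P⁻ (I − KH)^T + K R K^T. -/
open Matrix

theorem stmt5 {m n : ℕ}
    (Pm : Matrix (Fin n) (Fin n) ℝ) (hPm : Pm.PosSemidef)
    (H : Matrix (Fin m) (Fin n) ℝ)
    (R : Matrix (Fin m) (Fin m) ℝ) (hR : R.PosDef)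
    (J : Matrix (Fin n) (Fin m) ℝ → Matrix (Fin n) (Fin n) ℝ)
    (hJ : ∀ K, J K = (1 - K * H) * Pm * (1 - K * H)ᵀ + K * R * Kᵀ) :
    ∀ K, (J (Pm * Hᵀ * (H * Pm * Hᵀ + R)⁻¹)).trace ≤ (J K).trace := by
  intro K
  set S : Matrix (Fin m) (Fin m) ℝ := H * Pm * Hᵀ + R with hS
  have hPt : Pmᵀ = Pm := hPm.isHermitian
  have hHPH : (H * Pm * Hᵀ).PosSemidef := by
    have := hPm.mul_mul_conjTranspose_same H
    simpa using this
  have hSpd : S.PosDef := Matrix.PosDef.posSemidef_add hHPH hR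
  have hSt : Sᵀ = S := hSpd.isHermitian
  have hdet : IsUnit S.det := isUnit_iff_ne_zero.mpr hSpd.det_pos.ne'
  have hinv1 : S⁻¹ * S = 1 := nonsing_inv_mul S hdet
  have hinv2 : S * S⁻¹ = 1 := mul_nonsing_inv S hdet
  set K₀ : Matrix (Fin n) (Fin m) ℝ := Pm * Hᵀ * S⁻¹ with hK₀
  have hSinvT : (S⁻¹)ᵀ = S⁻¹ := by
    rw [transpose_nonsing_inv, hSt]
  have h1 : K₀ * S = Pm * Hᵀ := by
    rw [hK₀, Matrix.mul_assoc, hinv1, Matrix.mul_one]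
  have h2 : S * K₀ᵀ = H * Pm := by
    rw [hK₀]
    simp [transpose_mul, hPt, hSinvT, ← Matrix.mul_assoc, hinv2]
  have expand : ∀ L : Matrix (Fin n) (Fin m) ℝ,
      J L = Pm - L * (H * Pm) - Pm * Hᵀ * Lᵀ + L * S * Lᵀ := by
    intro L
    rw [hJ, hS]
    simp only [transpose_sub, transpose_mul, transpose_one, hPt,
      Matrix.mul_sub, Matrix.sub_mul, Matrix.mul_add, Matrix.add_mul,
      Matrix.mul_one, Matrix.one_mul]
    simp only [Matrix.mul_assoc]
    abel
  have hK00 : K₀ * S * K₀ᵀ = K₀ * (H * Pm) := by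
    rw [Matrix.mul_assoc, h2]
  have hdiff : (K - K₀) * S * (K - K₀)ᵀ
      = K * S * Kᵀ - K * (H * Pm) - Pm * Hᵀ * Kᵀ + K₀ * (H * Pm) := by
    simp only [transpose_sub, Matrix.mul_sub, Matrix.sub_mul]
    rw [show K * S * K₀ᵀ = K * (H * Pm) by rw [Matrix.mul_assoc, h2],
        show K₀ * S * Kᵀ = Pm * Hᵀ * Kᵀ by rw [h1], hK00]
    abel
  have key : J K = J K₀ + (K - K₀) * S * (K - K₀)ᵀ := by
    rw [expand K, expand K₀, hdiff, hK00,
        show Pm * Hᵀ * K₀ᵀ = K₀ * (H * Pm) by rw [← h1, hK00]]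
    abel
  have hpsd : ((K - K₀) * S * (K - K₀)ᵀ).PosSemidef := by
    have := hSpd.posSemidef.mul_mul_conjTranspose_same (K - K₀)
    simpa using this
  have htr : 0 ≤ ((K - K₀) * S * (K - K₀)ᵀ).trace := by
    rw [Matrix.trace]
    apply Finset.sum_nonneg
    intro i _
    exact hpsd.diag_nonneg
  rw [key, trace_add]
  linarith
end

section
/- If P(t) solves the Lyapunov differential equation dP/dt = F(t)P + PF(t)^T + Q with P(t₀) symmetric positive semidefinite and Q symmetric positive semidefinite, then P(t) is symmetric positive semidefinite for all t ≥ t₀. -/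
open Matrix Set

namespace Stmt9Aux

variable {n : ℕ}

/-- quadratic form -/
noncomputable def quad (A : Matrix (Fin n) (Fin n) ℝ) (x : Fin n → ℝ) : ℝ := x ⬝ᵥ (A *ᵥ x)

/-- unit sphere for the dot product -/
def unit (n : ℕ) : Set (Fin n → ℝ) := {x | x ⬝ᵥ x = 1}

noncomputable def lam (A : Matrix (Fin n) (Fin n) ℝ) : ℝ := sInf (quad A '' unit n)

lemma dot_self_nonneg (x : Fin n → ℝ) : 0 ≤ x ⬝ᵥ x :=
  Finset.sum_nonneg fun i _ => mul_self_nonneg (x i)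

lemma sq_le_dot (x : Fin n → ℝ) (i : Fin n) : x i * x i ≤ x ⬝ᵥ x :=
  Finset.single_le_sum (fun j _ => mul_self_nonneg (x j)) (Finset.mem_univ i)

lemma abs_le_sqrt_dot (x : Fin n → ℝ) (i : Fin n) : |x i| ≤ Real.sqrt (x ⬝ᵥ x) := by
  have h := sq_le_dot x i
  calc |x i| = Real.sqrt (x i * x i) := by rw [Real.sqrt_mul_self_eq_abs]
  _ ≤ Real.sqrt (x ⬝ᵥ x) := Real.sqrt_le_sqrt h

lemma abs_le_one_of_unit {x : Fin n → ℝ} (hx : x ∈ unit n) (i : Fin n) : |x i| ≤ 1 := by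
  have := abs_le_sqrt_dot x i
  rwa [hx, Real.sqrt_one] at this

lemma quad_eq_sum (A : Matrix (Fin n) (Fin n) ℝ) (x : Fin n → ℝ) :
    quad A x = ∑ i, ∑ j, x i * (A i j * x j) := by
  simp [quad, dotProduct, mulVec, Finset.mul_sum]

/-- bilinear bound -/
lemma bilin_bound {A : Matrix (Fin n) (Fin n) ℝ} {M : ℝ} (hm : ∀ i j, |A i j| ≤ M)
    {x : Fin n → ℝ} (hx : x ∈ unit n) (y : Fin n → ℝ) :
    |x ⬝ᵥ (A *ᵥ y)| ≤ n ^ 2 * M * Real.sqrt (y ⬝ᵥ y) := by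
  have hM0 : 0 ≤ M := by
    rcases Nat.eq_zero_or_pos n with h | h
    · -- no indices; but M bound must come from somewhere; handle: x ⬝ᵥ x = 1 impossible
      exfalso
      have : x ⬝ᵥ x = 0 := by
        subst h; simp [dotProduct]
      rw [hx] at this; norm_num at this
    · exact (abs_nonneg _).trans (hm ⟨0, h⟩ ⟨0, h⟩)
  have hs : 0 ≤ Real.sqrt (y ⬝ᵥ y) := Real.sqrt_nonneg _
  calc |x ⬝ᵥ (A *ᵥ y)| = |∑ i, ∑ j, x i * (A i j * y j)| := by
        simp [dotProduct, mulVec, Finset.mul_sum]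
  _ ≤ ∑ i, ∑ j, |x i * (A i j * y j)| := by
        refine (Finset.abs_sum_le_sum_abs _ _).trans ?_
        exact Finset.sum_le_sum fun i _ => Finset.abs_sum_le_sum_abs _ _
  _ ≤ ∑ _i : Fin n, ∑ _j : Fin n, M * Real.sqrt (y ⬝ᵥ y) := by
        refine Finset.sum_le_sum fun i _ => Finset.sum_le_sum fun j _ => ?_
        rw [abs_mul, abs_mul]
        calc |x i| * (|A i j| * |y j|)
            ≤ 1 * (M * Real.sqrt (y ⬝ᵥ y)) := by
              refine mul_le_mul (abs_le_one_of_unit hx i) ?_ (by positivity) zero_le_one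
              exact mul_le_mul (hm i j) (abs_le_sqrt_dot y j) (abs_nonneg _) hM0
        _ = M * Real.sqrt (y ⬝ᵥ y) := one_mul _
  _ = n ^ 2 * M * Real.sqrt (y ⬝ᵥ y) := by
        simp [Finset.sum_const]; ring

/-- quadratic bound -/
lemma quad_bound {A : Matrix (Fin n) (Fin n) ℝ} {M : ℝ} (hM0 : 0 ≤ M)
    (hm : ∀ i j, |A i j| ≤ M) (y : Fin n → ℝ) :
    |quad A y| ≤ n ^ 2 * M * (y ⬝ᵥ y) := by
  have key : ∀ i j : Fin n, |y i| * |y j| ≤ y ⬝ᵥ y := by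
    intro i j
    calc |y i| * |y j| ≤ Real.sqrt (y ⬝ᵥ y) * Real.sqrt (y ⬝ᵥ y) :=
          mul_le_mul (abs_le_sqrt_dot y i) (abs_le_sqrt_dot y j) (abs_nonneg _) (Real.sqrt_nonneg _)
    _ = y ⬝ᵥ y := Real.mul_self_sqrt (dot_self_nonneg y)
  calc |quad A y| = |∑ i, ∑ j, y i * (A i j * y j)| := by rw [quad_eq_sum]
  _ ≤ ∑ i, ∑ j, |y i * (A i j * y j)| := by
        refine (Finset.abs_sum_le_sum_abs _ _).trans ?_
        exact Finset.sum_le_sum fun i _ => Finset.abs_sum_le_sum_abs _ _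
  _ ≤ ∑ _i : Fin n, ∑ _j : Fin n, M * (y ⬝ᵥ y) := by
        refine Finset.sum_le_sum fun i _ => Finset.sum_le_sum fun j _ => ?_
        rw [abs_mul, abs_mul]
        calc |y i| * (|A i j| * |y j|) = |A i j| * (|y i| * |y j|) := by ring
        _ ≤ M * (y ⬝ᵥ y) :=
          mul_le_mul (hm i j) (key i j) (by positivity) hM0
  _ = n ^ 2 * M * (y ⬝ᵥ y) := by simp [Finset.sum_const]; ring



lemma unit_nonempty (hn : 0 < n) : (unit n).Nonempty := by
  refine ⟨Pi.single ⟨0, hn⟩ 1, ?_⟩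
  simp [unit, dotProduct, Pi.single_apply]

lemma bddBelow_quad {A : Matrix (Fin n) (Fin n) ℝ} {M : ℝ} (hM0 : 0 ≤ M)
    (hm : ∀ i j, |A i j| ≤ M) : BddBelow (quad A '' unit n) := by
  refine ⟨-(n ^ 2 * M), ?_⟩
  rintro v ⟨x, hx, rfl⟩
  have := quad_bound hM0 hm x
  rw [hx, mul_one] at this
  linarith [abs_le.1 this |>.1]

lemma lam_le {A : Matrix (Fin n) (Fin n) ℝ} {M : ℝ} (hM0 : 0 ≤ M)
    (hm : ∀ i j, |A i j| ≤ M) {x : Fin n → ℝ} (hx : x ∈ unit n) : lam A ≤ quad A x :=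
  csInf_le (bddBelow_quad hM0 hm) ⟨x, hx, rfl⟩

lemma le_lam (hn : 0 < n) {A : Matrix (Fin n) (Fin n) ℝ} {c : ℝ}
    (h : ∀ x ∈ unit n, c ≤ quad A x) : c ≤ lam A :=
  le_csInf ((unit_nonempty hn).image _) (by rintro v ⟨x, hx, rfl⟩; exact h x hx)

lemma abs_lam_le (hn : 0 < n) {A : Matrix (Fin n) (Fin n) ℝ} {M : ℝ} (hM0 : 0 ≤ M)
    (hm : ∀ i j, |A i j| ≤ M) : |lam A| ≤ n ^ 2 * M := by
  obtain ⟨x, hx⟩ := unit_nonempty hn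
  rw [abs_le]
  constructor
  · refine le_lam hn fun y hy => ?_
    have := quad_bound hM0 hm y
    rw [hy, mul_one] at this
    linarith [abs_le.1 this |>.1]
  · refine (lam_le hM0 hm hx).trans ?_
    have := quad_bound hM0 hm x
    rw [hx, mul_one] at this
    exact (le_abs_self _).trans this

lemma lam_mul_le_quad (hn : 0 < n) {A : Matrix (Fin n) (Fin n) ℝ} {M : ℝ} (hM0 : 0 ≤ M)
    (hm : ∀ i j, |A i j| ≤ M) (y : Fin n → ℝ) : lam A * (y ⬝ᵥ y) ≤ quad A y := by
  rcases eq_or_lt_of_le (dot_self_nonneg y) with h0 | hpos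
  · -- y ⬝ᵥ y = 0 → y = 0
    have hy : y = 0 := by
      funext i
      have h1 : ∀ j ∈ Finset.univ, (0:ℝ) ≤ y j * y j := fun j _ => mul_self_nonneg _
      have h2 := (Finset.sum_eq_zero_iff_of_nonneg h1).1 h0.symm i (Finset.mem_univ i)
      have h3 := mul_self_eq_zero.1 h2
      simpa using h3
    subst hy
    simp [quad]
  · set c := Real.sqrt (y ⬝ᵥ y) with hc
    have hc0 : 0 < c := Real.sqrt_pos.2 hpos
    have hcc : c * c = y ⬝ᵥ y := Real.mul_self_sqrt (le_of_lt hpos)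
    have hu : (c⁻¹ • y) ∈ unit n := by
      simp only [unit, mem_setOf_eq, smul_dotProduct, dotProduct_smul, smul_eq_mul]
      field_simp
      nlinarith
    have h1 : quad A (c⁻¹ • y) = (c⁻¹ * c⁻¹) * quad A y := by
      simp [quad, mulVec_smul, smul_dotProduct, dotProduct_smul, smul_eq_mul]; ring
    have h2 := lam_le hM0 hm hu
    rw [h1] at h2
    have h3 : lam A * (y ⬝ᵥ y) = (c * c) * lam A := by rw [hcc]; ring
    rw [h3]
    calc (c * c) * lam A ≤ (c * c) * ((c⁻¹ * c⁻¹) * quad A y) := by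
          apply mul_le_mul_of_nonneg_left h2 (by positivity)
    _ = quad A y := by field_simp
lemma quad_sub (A B : Matrix (Fin n) (Fin n) ℝ) (x : Fin n → ℝ) :
    quad A x - quad B x = quad (A - B) x := by
  simp [quad, sub_mulVec, dotProduct_sub]

/-- one-sided Lipschitz comparison for lam -/
lemma lam_le_lam_add (hn : 0 < n) {A B : Matrix (Fin n) (Fin n) ℝ} {MA MB D : ℝ}
    (hA0 : 0 ≤ MA) (hA : ∀ i j, |A i j| ≤ MA) (hB0 : 0 ≤ MB) (hB : ∀ i j, |B i j| ≤ MB)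
    (hD : ∀ i j, |A i j - B i j| ≤ D) : lam A ≤ lam B + (n:ℝ) ^ 2 * D := by
  have hD0 : 0 ≤ D := (abs_nonneg _).trans (hD ⟨0, hn⟩ ⟨0, hn⟩)
  have key : ∀ x ∈ unit n, lam A - (n:ℝ) ^ 2 * D ≤ quad B x := by
    intro x hx
    have h1 : lam A ≤ quad A x := lam_le hA0 hA hx
    have h2 : |quad (A - B) x| ≤ n ^ 2 * D * (x ⬝ᵥ x) :=
      quad_bound hD0 (by intro i j; simpa [Matrix.sub_apply] using hD i j) x
    rw [hx, mul_one] at h2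
    have h3 := quad_sub A B x
    have := abs_le.1 h2
    linarith
  have := le_lam hn key
  linarith

lemma abs_lam_sub_le (hn : 0 < n) {A B : Matrix (Fin n) (Fin n) ℝ} {MA MB D : ℝ}
    (hA0 : 0 ≤ MA) (hA : ∀ i j, |A i j| ≤ MA) (hB0 : 0 ≤ MB) (hB : ∀ i j, |B i j| ≤ MB)
    (hD : ∀ i j, |A i j - B i j| ≤ D) : |lam A - lam B| ≤ (n:ℝ) ^ 2 * D := by
  have h1 := lam_le_lam_add hn hA0 hA hB0 hB hD
  have h2 := lam_le_lam_add hn hB0 hB hA0 hA (fun i j => by rw [abs_sub_comm]; exact hD i j)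
  rw [abs_le]; constructor <;> linarith

open scoped MatrixOrder in
/-- approximate eigenvector lemma -/
lemma approx_eig (hn : 0 < n) {A : Matrix (Fin n) (Fin n) ℝ} (hA : Aᵀ = A)
    {M : ℝ} (hM0 : 0 ≤ M) (hm : ∀ i j, |A i j| ≤ M) {x : Fin n → ℝ} (hx : x ∈ unit n)
    {δ : ℝ} (hδ : quad A x ≤ lam A + δ) :
    (A *ᵥ x - lam A • x) ⬝ᵥ (A *ᵥ x - lam A • x) ≤ 2 * n ^ 2 * M * δ := by
  set B : Matrix (Fin n) (Fin n) ℝ := A - lam A • 1 with hBdef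
  have hBherm : B.IsHermitian := by
    rw [Matrix.IsHermitian, conjTranspose_eq_transpose_of_trivial]
    simp [hBdef, Matrix.transpose_smul, hA]
  have hquadB : ∀ y, y ⬝ᵥ (B *ᵥ y) = quad A y - lam A * (y ⬝ᵥ y) := by
    intro y
    simp [hBdef, sub_mulVec, dotProduct_sub, quad, smul_mulVec, one_mulVec,
      dotProduct_smul, smul_eq_mul]
  have hBpsd : B.PosSemidef := by
    refine PosSemidef.of_dotProduct_mulVec_nonneg hBherm fun y => ?_
    have := lam_mul_le_quad hn hM0 hm y
    rw [show star y = y from star_trivial y, hquadB y]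
    linarith
  set S := CFC.sqrt B with hS
  have hSS : S * S = B := CFC.sqrt_mul_sqrt_self B hBpsd.nonneg
  have hSsymm : Sᵀ = S := by
    have := (CFC.sqrt_nonneg B).posSemidef.1
    rwa [Matrix.IsHermitian, conjTranspose_eq_transpose_of_trivial] at this
  have hw : A *ᵥ x - lam A • x = B *ᵥ x := by
    simp [hBdef, sub_mulVec, smul_mulVec, one_mulVec]
  rw [hw]
  set y := S *ᵥ x with hy
  have hBx : B *ᵥ x = S *ᵥ y := by rw [hy, mulVec_mulVec, hSS]
  have key : ∀ z : Fin n → ℝ, (S *ᵥ z) ⬝ᵥ (S *ᵥ z) = z ⬝ᵥ (B *ᵥ z) := by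
    intro z
    have hvm : z ᵥ* S = S *ᵥ z := by rw [← Matrix.mulVec_transpose S z, hSsymm]
    calc (S *ᵥ z) ⬝ᵥ (S *ᵥ z) = (z ᵥ* S) ⬝ᵥ (S *ᵥ z) := by rw [hvm]
    _ = z ⬝ᵥ (S *ᵥ (S *ᵥ z)) := (Matrix.dotProduct_mulVec z S (S *ᵥ z)).symm
    _ = z ⬝ᵥ (B *ᵥ z) := by rw [mulVec_mulVec, hSS]
  have hyB : y ⬝ᵥ y = x ⬝ᵥ (B *ᵥ x) := key x
  have hyδ : y ⬝ᵥ y ≤ δ := by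
    rw [hyB, hquadB x, hx, mul_one]; linarith
  have hy0 : 0 ≤ y ⬝ᵥ y := dot_self_nonneg y
  have habs : |lam A| ≤ n ^ 2 * M := abs_lam_le hn hM0 hm
  have hfinal : (S *ᵥ y) ⬝ᵥ (S *ᵥ y) ≤ 2 * n ^ 2 * M * (y ⬝ᵥ y) := by
    rw [key y, hquadB y]
    have h1 := quad_bound hM0 hm y
    have h2 := abs_le.1 h1
    have h3 := abs_le.1 habs
    nlinarith [dot_self_nonneg y]
  rw [hBx]
  calc (S *ᵥ y) ⬝ᵥ (S *ᵥ y) ≤ 2 * n ^ 2 * M * (y ⬝ᵥ y) := hfinal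
  _ ≤ 2 * n ^ 2 * M * δ := by
      apply mul_le_mul_of_nonneg_left hyδ (by positivity)

lemma exists_entry_bound {n : ℕ} {t₀ T : ℝ} (g : ℝ → Matrix (Fin n) (Fin n) ℝ)
    (hg : ∀ i j, ContinuousOn (fun t => g t i j) (Set.Icc t₀ T)) :
    ∃ C : ℝ, 1 ≤ C ∧ ∀ t ∈ Set.Icc t₀ T, ∀ i j, |g t i j| ≤ C := by
  set gp : ℝ → (Fin n × Fin n → ℝ) := fun t p => g t p.1 p.2 with hgp
  have hc : ContinuousOn gp (Set.Icc t₀ T) := continuousOn_pi.2 fun p => hg p.1 p.2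
  obtain ⟨C, hC⟩ := isCompact_Icc.exists_bound_of_continuousOn hc
  refine ⟨max C 1, le_max_right _ _, fun t htm i j => ?_⟩
  calc |g t i j| = ‖gp t (i, j)‖ := rfl
  _ ≤ ‖gp t‖ := norm_le_pi_norm _ _
  _ ≤ C := hC t htm
  _ ≤ max C 1 := le_max_left _ _

lemma symm_of_ode {n : ℕ} {t₀ T : ℝ}
    (F : ℝ → Matrix (Fin n) (Fin n) ℝ)
    (hF : ∀ i j, ContinuousOn (fun t => F t i j) (Set.Icc t₀ T))
    (Q : Matrix (Fin n) (Fin n) ℝ) (hQ : Q.PosSemidef)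
    (P : ℝ → Matrix (Fin n) (Fin n) ℝ)
    (hP : ∀ t ∈ Set.Icc t₀ T, ∀ i j,
      HasDerivAt (fun s => P s i j) ((F t * P t + P t * (F t)ᵀ + Q) i j) t)
    (h0 : (P t₀)ᵀ = P t₀) :
    ∀ t ∈ Set.Icc t₀ T, (P t)ᵀ = P t := by
  obtain ⟨CF, hCF1, hCF⟩ := exists_entry_bound F hF
  set G : ℝ → Matrix (Fin n) (Fin n) ℝ := fun t => F t * P t + P t * (F t)ᵀ + Q with hG
  set d : ℝ → (Fin n × Fin n → ℝ) := fun t p => P t p.1 p.2 - P t p.2 p.1 with hd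
  set d' : ℝ → (Fin n × Fin n → ℝ) := fun t p => G t p.1 p.2 - G t p.2 p.1 with hd'
  have hQS : ∀ i j, Q i j = Q j i := by
    intro i j
    have := congrFun (congrFun hQ.1 j) i
    simpa [Matrix.conjTranspose_apply] using this
  have hderiv : ∀ t ∈ Set.Icc t₀ T, HasDerivAt d (d' t) t := by
    intro t htm
    rw [hasDerivAt_pi]
    intro p
    exact ((hP t htm p.1 p.2).sub (hP t htm p.2 p.1))
  have hcont : ContinuousOn d (Set.Icc t₀ T) := fun t htm =>
    ((hderiv t htm).continuousAt).continuousWithinAt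
  -- entry identity for d'
  have hent : ∀ t ∈ Set.Icc t₀ T, ∀ p : Fin n × Fin n,
      d' t p = (∑ k, F t p.1 k * d t (k, p.2)) + ∑ k, F t p.2 k * d t (p.1, k) := by
    intro t htm p
    obtain ⟨i, j⟩ := p
    simp only [hd', hd, hG, Matrix.add_apply, Matrix.mul_apply, Matrix.transpose_apply]
    rw [hQS i j]
    have hsplit : (∑ x : Fin n, F t i x * P t x j + ∑ x : Fin n, P t i x * F t j x + Q j i -
        (∑ x : Fin n, F t j x * P t x i + ∑ x : Fin n, P t j x * F t i x + Q j i)) =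
        ∑ x : Fin n, ((F t i x * P t x j - P t j x * F t i x) +
          (P t i x * F t j x - F t j x * P t x i)) := by
      rw [Finset.sum_add_distrib, Finset.sum_sub_distrib, Finset.sum_sub_distrib]; ring
    rw [hsplit, ← Finset.sum_add_distrib]
    exact Finset.sum_congr rfl fun k _ => by ring
  -- bound
  have hbound : ∀ t ∈ Set.Ico t₀ T, ‖d' t‖ ≤ (2 * n * CF) * ‖d t‖ + 0 := by
    intro t htm
    have htm' := Set.mem_Icc_of_Ico htm
    rw [add_zero]
    have hnn : (0:ℝ) ≤ 2 * n * CF * ‖d t‖ := by positivity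
    rw [pi_norm_le_iff_of_nonneg hnn]
    intro p
    rw [hent t htm' p, Real.norm_eq_abs]
    calc |(∑ k, F t p.1 k * d t (k, p.2)) + ∑ k, F t p.2 k * d t (p.1, k)|
        ≤ |∑ k, F t p.1 k * d t (k, p.2)| + |∑ k, F t p.2 k * d t (p.1, k)| := abs_add_le _ _
    _ ≤ (∑ k, |F t p.1 k * d t (k, p.2)|) + ∑ k, |F t p.2 k * d t (p.1, k)| := by
        gcongr <;> exact Finset.abs_sum_le_sum_abs _ _
    _ ≤ (∑ _k : Fin n, CF * ‖d t‖) + ∑ _k : Fin n, CF * ‖d t‖ := by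
        gcongr with k _ k _
        · rw [abs_mul]
          exact mul_le_mul (hCF t htm' p.1 k) (norm_le_pi_norm (d t) (k, p.2))
            (abs_nonneg _) (by linarith)
        · rw [abs_mul]
          exact mul_le_mul (hCF t htm' p.2 k) (norm_le_pi_norm (d t) (p.1, k))
            (abs_nonneg _) (by linarith)
    _ = 2 * n * CF * ‖d t‖ := by simp [Finset.sum_const]; ring
  have h0' : ‖d t₀‖ ≤ 0 := by
    have : d t₀ = 0 := by
      funext p
      have h4 := congrFun (congrFun h0 p.1) p.2
      rw [Matrix.transpose_apply] at h4
      show P t₀ p.1 p.2 - P t₀ p.2 p.1 = 0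
      rw [h4, sub_self]
    simp [this]
  have key := norm_le_gronwallBound_of_norm_deriv_right_le hcont
    (fun t htm => (hderiv t (Set.mem_Icc_of_Ico htm)).hasDerivWithinAt) h0' hbound
  intro t htm
  have h1 := key t htm
  rw [gronwallBound_ε0_δ0] at h1
  have h2 : d t = 0 := by
    have := norm_nonneg (d t)
    have h3 : ‖d t‖ = 0 := le_antisymm h1 this
    exact norm_eq_zero.1 h3
  ext i j
  have := congrFun h2 (j, i)
  simpa [hd, Matrix.transpose_apply, sub_eq_zero] using this


end Stmt9Aux


namespace Stmt9Aux

lemma arith1 {M₂ n2 θ W : ℝ} (hθ : 0 < θ) (h9 : θ * (16*M₂*n2+1) ≤ W^2) :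
    8*M₂*n2*θ ≤ W^2/2 := by nlinarith

lemma arith2 {M₂ ε₀ zt η W : ℝ} (hM : 0 < M₂) (hε : 0 < ε₀) (hzt : 0 < zt) (hle : zt ≤ η)
    (h10 : η * (M₂*ε₀+1) ≤ W^2) : M₂*ε₀*zt/2 ≤ W^2/2 := by nlinarith

lemma arith3 {C ε₀ : ℝ} (hC : 0 < C) (hε : 0 < ε₀) : C * (ε₀/(8*C+8)) ≤ ε₀/8 := by
  rw [mul_div_assoc', div_le_div_iff₀ (by positivity) (by norm_num)]
  nlinarith

lemma arith4 {C n2 θ ε₀ : ℝ} (hθ : 0 < θ) (hC : 0 < C) (h17 : θ * (8*C*n2+1) ≤ ε₀) :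
    2*C*n2*θ ≤ ε₀/4 := by nlinarith

lemma arith5 {a b c C : ℝ} (h : a ≤ b + c) (hC : 0 ≤ C) : a*C ≤ b*C + c*C := by nlinarith

lemma arith6 {C n2 θ ε₀ : ℝ} (h : 2*C*n2*θ ≤ ε₀/4) : n2*θ*C ≤ ε₀/8 ∨ True := Or.inr trivial

lemma arith7 {zt Lc ε₀ D : ℝ} (hzt : 0 < zt) (hε : 0 < ε₀)
    (h : zt * (-Lc - ε₀/2) - zt*(ε₀/4) < D) : -D < zt*(Lc + ε₀) := by nlinarith

end Stmt9Aux

set_option maxHeartbeats 1000000 in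
open Stmt9Aux in
theorem stmt9 {n : ℕ} (t₀ T : ℝ) (ht : t₀ ≤ T)
    (F : ℝ → Matrix (Fin n) (Fin n) ℝ)
    (hF : ∀ i j, ContinuousOn (fun t => F t i j) (Set.Icc t₀ T))
    (Q : Matrix (Fin n) (Fin n) ℝ) (hQ : Q.PosSemidef)
    (P : ℝ → Matrix (Fin n) (Fin n) ℝ)
    (hP : ∀ t ∈ Set.Icc t₀ T, ∀ i j,
      HasDerivAt (fun s => P s i j) ((F t * P t + P t * (F t)ᵀ + Q) i j) t)
    (h0 : (P t₀).PosSemidef) :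
    ∀ t ∈ Set.Icc t₀ T, (P t).PosSemidef := by
  rcases Nat.eq_zero_or_pos n with hn0 | hn
  · subst hn0
    intro t _
    constructor
    · ext i j; exact absurd i.2 (by omega)
    · intro x; simp [Subsingleton.elim x 0]
  -- positive dimension
  obtain ⟨CF, hCF1, hCF⟩ := exists_entry_bound F hF
  have hPcont : ∀ i j, ContinuousOn (fun t => P t i j) (Set.Icc t₀ T) :=
    fun i j t htm => ((hP t htm i j).continuousAt).continuousWithinAt
  obtain ⟨M, hM1, hM⟩ := exists_entry_bound P hPcont
  have hM0 : ∀ s ∈ Set.Icc t₀ T, (0:ℝ) ≤ M := fun _ _ => by linarith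
  have h0T : (P t₀)ᵀ = P t₀ := by
    have := h0.1
    rwa [Matrix.IsHermitian, conjTranspose_eq_transpose_of_trivial] at this
  have hsymm : ∀ t ∈ Set.Icc t₀ T, (P t)ᵀ = P t := symm_of_ode F hF Q hQ P hP h0T
  set G : ℝ → Matrix (Fin n) (Fin n) ℝ := fun t => F t * P t + P t * (F t)ᵀ + Q with hG
  set C : ℝ := (n:ℝ)^2 * CF with hC
  set K : ℝ := 2*C + 1 with hK
  set M₂ : ℝ := (n:ℝ)^2 * M with hM₂
  have hn1 : (1:ℝ) ≤ (n:ℝ) := by exact_mod_cast hn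
  have hCpos : 0 < C := by nlinarith
  have hM₂pos : 0 < M₂ := by nlinarith
  have hKpos : 0 < K := by nlinarith
  set pp : ℝ → (Fin n × Fin n → ℝ) := fun t p => P t p.1 p.2 with hpp
  have hppcont : ContinuousOn pp (Set.Icc t₀ T) := continuousOn_pi.2 fun p => hPcont p.1 p.2
  have hppdist : ∀ s ∈ Set.Icc t₀ T, ∀ u ∈ Set.Icc t₀ T, ∀ i j,
      |P s i j - P u i j| ≤ dist (pp s) (pp u) := by
    intro s _ u _ i j
    have := dist_le_pi_dist (pp s) (pp u) (i, j)
    rwa [Real.dist_eq] at this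
  have hlamdist : ∀ s ∈ Set.Icc t₀ T, ∀ u ∈ Set.Icc t₀ T,
      |lam (P s) - lam (P u)| ≤ (n:ℝ)^2 * dist (pp s) (pp u) :=
    fun s hs u hu => abs_lam_sub_le hn (by linarith) (hM s hs) (by linarith) (hM u hu)
      (hppdist s hs u hu)
  -- continuity of -lam (P ·)
  have hlam_cont : ContinuousOn (fun s => -lam (P s)) (Set.Icc t₀ T) := by
    intro t htm
    have h1 := hppcont t htm
    rw [Metric.continuousWithinAt_iff] at h1 ⊢
    intro ε hε
    obtain ⟨η, hη, h2⟩ := h1 (ε / ((n:ℝ)^2 + 1)) (by positivity)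
    refine ⟨η, hη, fun s hs hds => ?_⟩
    have h3 := h2 hs hds
    have h4 := hlamdist s hs t htm
    rw [Real.dist_eq]
    have h5 : (n:ℝ)^2 * dist (pp s) (pp t) < (n:ℝ)^2 * (ε / ((n:ℝ)^2 + 1)) := by
      apply mul_lt_mul_of_pos_left h3 (by positivity)
    have h6 : (n:ℝ)^2 * (ε / ((n:ℝ)^2 + 1)) < ε := by
      rw [mul_comm, div_mul_eq_mul_div, div_lt_iff₀ (by positivity)]
      nlinarith
    have h7 : |-lam (P s) - -lam (P t)| = |lam (P s) - lam (P t)| := by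
      rw [← abs_neg]; ring_nf
    rw [h7]
    linarith
  -- derivative of quadratic form
  have hqd : ∀ s ∈ Set.Icc t₀ T, ∀ x : Fin n → ℝ,
      HasDerivAt (fun u => quad (P u) x) (quad (G s) x) s := by
    intro s hs x
    have key : HasDerivAt (fun u => ∑ i, ∑ j, x i * (P u i j * x j))
        (∑ i, ∑ j, x i * (G s i j * x j)) s := by
      apply HasDerivAt.fun_sum; intro i _; apply HasDerivAt.fun_sum; intro j _
      exact ((hP s hs i j).mul_const (x j)).const_mul (x i)
    have h1 : (fun u => quad (P u) x) = fun u => ∑ i, ∑ j, x i * (P u i j * x j) :=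
      funext fun u => quad_eq_sum _ _
    rw [h1, quad_eq_sum]
    exact key
  -- quadratic form of G
  have hGquad : ∀ s ∈ Set.Icc t₀ T, ∀ x : Fin n → ℝ,
      quad (G s) x = 2 * (x ⬝ᵥ (F s *ᵥ (P s *ᵥ x))) + quad Q x := by
    intro s hs x
    have hsym := hsymm s hs
    have e1 : x ⬝ᵥ ((F s * P s) *ᵥ x) = x ⬝ᵥ (F s *ᵥ (P s *ᵥ x)) := by
      rw [← mulVec_mulVec]
    have e2 : x ⬝ᵥ ((P s * (F s)ᵀ) *ᵥ x) = x ⬝ᵥ (F s *ᵥ (P s *ᵥ x)) := by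
      rw [← mulVec_mulVec]
      rw [Matrix.dotProduct_mulVec x (P s) ((F s)ᵀ *ᵥ x)]
      rw [← Matrix.mulVec_transpose (P s) x, hsym]
      rw [Matrix.mulVec_transpose (F s) x]
      rw [Matrix.dotProduct_mulVec x (F s) (P s *ᵥ x)]
      rw [dotProduct_comm]
    simp only [quad, hG, Matrix.add_mulVec, dotProduct_add]
    rw [e1, e2]
    ring
  have hQx : ∀ x : Fin n → ℝ, 0 ≤ quad Q x := by
    intro x
    have := hQ.dotProduct_mulVec_nonneg x
    rwa [star_trivial] at this
  -- the slope estimate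
  have hslope : ∀ t ∈ Set.Ico t₀ T, ∀ r, 2*C*|lam (P t)| < r →
      ∃ᶠ z in nhdsWithin t (Set.Ioi t), (lam (P t) - lam (P z)) / (z - t) < r := by
    intro t htIco r hr
    have htm : t ∈ Set.Icc t₀ T := ⟨htIco.1, le_of_lt htIco.2⟩
    set ε₀ : ℝ := r - 2*C*|lam (P t)| with hε₀
    have hε₀pos : 0 < ε₀ := sub_pos.2 hr
    set W : ℝ := ε₀ / (8*C + 8) with hW
    have hWpos : 0 < W := by positivity
    set θ : ℝ := min (ε₀ / (8*C*(n:ℝ)^2 + 1)) (W^2 / (16*M₂*(n:ℝ)^2 + 1)) with hθ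
    have hθpos : 0 < θ := lt_min (by positivity) (by positivity)
    have h1 := hppcont t htm
    rw [Metric.continuousWithinAt_iff] at h1
    obtain ⟨η₁, hη₁, hppθ⟩ := h1 θ hθpos
    set η : ℝ := min (min η₁ (T - t)) (W^2 / (M₂*ε₀ + 1)) with hη
    have hηpos : 0 < η := by
      exact lt_min (lt_min hη₁ (sub_pos.2 htIco.2)) (by positivity)
    have hmem : Set.Ioo t (t + η) ∈ nhdsWithin t (Set.Ioi t) :=
      Ioo_mem_nhdsGT_of_mem ⟨le_rfl, by linarith only [hηpos]⟩
    refine Filter.Eventually.frequently (Filter.eventually_of_mem hmem fun z hz => ?_)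
    obtain ⟨htz, hzη⟩ := hz
    have hztη : z - t < η := by linarith only [hzη]
    have hzT : z < T := by
      have h2' : η ≤ T - t := le_trans (min_le_left _ _) (min_le_right _ _)
      linarith only [h2', hzη]
    have hzm : z ∈ Set.Icc t₀ T := ⟨le_trans htIco.1 (le_of_lt htz), le_of_lt hzT⟩
    have hη1 : η ≤ η₁ := le_trans (min_le_left _ _) (min_le_left _ _)
    have hdzt : dist (pp z) (pp t) < θ := by
      refine hppθ hzm ?_
      rw [Real.dist_eq, abs_of_pos (sub_pos.2 htz)]
      linarith only [hztη, hη1]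
    set δ₁ : ℝ := (z - t) * ε₀ / 4 with hδ₁
    have hδ₁pos : 0 < δ₁ := by
      have hzt' : 0 < z - t := sub_pos.2 htz
      positivity
    -- near-minimizer at z
    have hlt : sInf (quad (P z) '' unit n) < lam (P z) + δ₁ :=
      lt_add_of_pos_right _ hδ₁pos
    obtain ⟨v, ⟨x, hxu, rfl⟩, hvlt⟩ :=
      (csInf_lt_iff (bddBelow_quad (by linarith only [hM1] : (0:ℝ) ≤ M) (hM z hzm))
        ((unit_nonempty hn).image _)).1 hlt
    -- MVT
    have hsub : Set.Icc t z ⊆ Set.Icc t₀ T := Set.Icc_subset_Icc htIco.1 (le_of_lt hzT)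
    have hgc : ContinuousOn (fun u => quad (P u) x) (Set.Icc t z) := fun u hu =>
      ((hqd u (hsub hu) x).continuousAt).continuousWithinAt
    obtain ⟨ξ, hξmem, hξ⟩ := exists_hasDerivAt_eq_slope (fun u => quad (P u) x)
      (fun u => quad (G u) x) htz hgc
      (fun u hu => hqd u (hsub (Set.mem_Icc_of_Ioo hu)) x)
    have hξm : ξ ∈ Set.Icc t₀ T := hsub (Set.mem_Icc_of_Ioo hξmem)
    have hdξt : dist (pp ξ) (pp t) < θ := by
      refine hppθ hξm ?_
      rw [Real.dist_eq, abs_of_pos (sub_pos.2 hξmem.1)]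
      linarith only [hξmem.2, hztη, hη1]
    -- entry bounds
    have hdiff_ξt : ∀ i j, |P ξ i j - P t i j| ≤ θ := fun i j =>
      le_of_lt (lt_of_le_of_lt (hppdist ξ hξm t htm i j) hdξt)
    have hdiff_ξz : ∀ i j, |P ξ i j - P z i j| ≤ 2*θ := by
      intro i j
      have h2 := hppdist ξ hξm t htm i j
      have h3 := hppdist t htm z hzm i j
      have h4 : dist (pp t) (pp z) < θ := by rw [dist_comm]; exact hdzt
      calc |P ξ i j - P z i j| ≤ |P ξ i j - P t i j| + |P t i j - P z i j| := abs_sub_le _ _ _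
      _ ≤ 2*θ := by linarith only [h2, h3, h4, hdξt]
    -- lam bounds
    have hlam_ξz : |lam (P ξ) - lam (P z)| ≤ (n:ℝ)^2*(2*θ) :=
      abs_lam_sub_le hn (by linarith only [hM1]) (hM ξ hξm) (by linarith only [hM1]) (hM z hzm) hdiff_ξz
    have hlam_ξt : |lam (P ξ) - lam (P t)| ≤ (n:ℝ)^2*θ :=
      abs_lam_sub_le hn (by linarith only [hM1]) (hM ξ hξm) (by linarith only [hM1]) (hM t htm) hdiff_ξt
    -- quad difference at x
    have hquad_ξz : |quad (P ξ) x - quad (P z) x| ≤ (n:ℝ)^2*(2*θ) := by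
      have h5 : ∀ i j, |(P ξ - P z) i j| ≤ 2*θ := by
        intro i j; simpa [Matrix.sub_apply] using hdiff_ξz i j
      have h6 := quad_bound (by linarith only [hθpos] : (0:ℝ) ≤ 2*θ) h5 x
      rw [hxu, mul_one] at h6
      rwa [quad_sub]
    -- δ₂ minimizer at ξ
    set δ₂ : ℝ := δ₁ + 4*(n:ℝ)^2*θ with hδ₂
    have hδ₂min : quad (P ξ) x ≤ lam (P ξ) + δ₂ := by
      have h7 := abs_le.1 hquad_ξz
      have h8 := abs_le.1 hlam_ξz
      simp only [hδ₂]
      linarith only [h7.1, h7.2, h8.1, h8.2, hvlt]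
    -- approximate eigenvector
    have hξsym : (P ξ)ᵀ = P ξ := hsymm ξ hξm
    set w : Fin n → ℝ := P ξ *ᵥ x - lam (P ξ) • x with hw
    have hweig : w ⬝ᵥ w ≤ 2*(n:ℝ)^2*M*δ₂ :=
      approx_eig hn hξsym (by linarith only [hM1] : (0:ℝ) ≤ M) (hM ξ hξm) hxu hδ₂min
    have hwW : w ⬝ᵥ w ≤ W^2 := by
      have hθ2 : θ ≤ W^2/(16*M₂*(n:ℝ)^2+1) := min_le_right _ _
      have hη2 : η ≤ W^2/(M₂*ε₀+1) := le_trans (le_refl η) (min_le_right _ _)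
      have h9 : θ * (16*M₂*(n:ℝ)^2+1) ≤ W^2 := by
        rw [← le_div_iff₀ (by positivity)]; exact hθ2
      have h10 : η * (M₂*ε₀+1) ≤ W^2 := by
        rw [← le_div_iff₀ (by positivity)]; exact hη2
      have hn2pos : (0:ℝ) < (n:ℝ)^2 := by positivity
      -- 2*n²*M*δ₂ = 2*M₂*δ₁ + 8*M₂*n²*θ
      have hexp : 2*(n:ℝ)^2*M*δ₂ = 2*M₂*δ₁ + 8*M₂*(n:ℝ)^2*θ := by
        simp only [hδ₂, hM₂]; ring
      have h11 : 8*M₂*(n:ℝ)^2*θ ≤ W^2/2 := arith1 hθpos h9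
      have h12 : 2*M₂*δ₁ ≤ W^2/2 := by
        have hzt : z - t ≤ η := le_of_lt hztη
        have : 2*M₂*δ₁ = M₂*ε₀*(z-t)/2 := by simp only [hδ₁]; ring
        rw [this]
        exact arith2 hM₂pos hε₀pos (sub_pos.2 htz) hzt h10
      linarith only [hweig, hexp, h11, h12]
    have hsqrtW : Real.sqrt (w ⬝ᵥ w) ≤ W := by
      rw [show W = Real.sqrt (W^2) from (Real.sqrt_sq hWpos.le).symm]
      exact Real.sqrt_le_sqrt hwW
    -- bilinear bounds
    have hb1 : |x ⬝ᵥ (F ξ *ᵥ x)| ≤ C := by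
      have h13 := bilin_bound (hCF ξ hξm) hxu x
      rwa [hxu, Real.sqrt_one, mul_one] at h13
    have hb2 : |x ⬝ᵥ (F ξ *ᵥ w)| ≤ C * W := by
      have h14 := bilin_bound (hCF ξ hξm) hxu w
      calc |x ⬝ᵥ (F ξ *ᵥ w)| ≤ (n:ℝ)^2 * CF * Real.sqrt (w ⬝ᵥ w) := h14
      _ ≤ C * W := by
          rw [hC]
          exact mul_le_mul_of_nonneg_left hsqrtW (by positivity)
    -- decomposition
    have hdec : x ⬝ᵥ (F ξ *ᵥ (P ξ *ᵥ x)) =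
        lam (P ξ) * (x ⬝ᵥ (F ξ *ᵥ x)) + x ⬝ᵥ (F ξ *ᵥ w) := by
      have h15 : P ξ *ᵥ x = lam (P ξ) • x + w := by
        simp only [hw]; ring_nf
      rw [h15, mulVec_add, mulVec_smul, dotProduct_add, dotProduct_smul, smul_eq_mul]
    have hlξ : |lam (P ξ)| ≤ |lam (P t)| + (n:ℝ)^2*θ := by
      have h16 := abs_sub_abs_le_abs_sub (lam (P ξ)) (lam (P t))
      linarith [hlam_ξt]
    have hCW : C * W ≤ ε₀/8 := by
      rw [hW]; exact arith3 hCpos hε₀pos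
    have hθ1 : 2*C*(n:ℝ)^2*θ ≤ ε₀/4 := by
      have hθa : θ ≤ ε₀/(8*C*(n:ℝ)^2+1) := min_le_left _ _
      have h17 : θ * (8*C*(n:ℝ)^2+1) ≤ ε₀ := by
        rw [← le_div_iff₀ (by positivity)]; exact hθa
      exact arith4 hθpos hCpos h17
    have hGlow : -(2*C*|lam (P t)|) - ε₀/2 ≤ quad (G ξ) x := by
      rw [hGquad ξ hξm x, hdec]
      have t1 : -(|lam (P ξ)| * C) ≤ lam (P ξ) * (x ⬝ᵥ (F ξ *ᵥ x)) := by
        have h18 : |lam (P ξ) * (x ⬝ᵥ (F ξ *ᵥ x))| ≤ |lam (P ξ)| * C := by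
          rw [abs_mul]
          exact mul_le_mul_of_nonneg_left hb1 (abs_nonneg _)
        linarith only [(abs_le.1 h18).1]
      have t2 : -(C*W) ≤ x ⬝ᵥ (F ξ *ᵥ w) := by linarith only [(abs_le.1 hb2).1]
      have t3 := hQx x
      have t4 : |lam (P ξ)| * C ≤ |lam (P t)| * C + (n:ℝ)^2*θ*C := arith5 hlξ hCpos.le
      have t5 : (n:ℝ)^2*θ*C ≤ ε₀/8 := by nlinarith only [hθ1]
      linarith only [t1, t2, t3, t4, t5, hCW]
    -- assemble
    have hquadt : lam (P t) ≤ quad (P t) x := lam_le (by linarith only [hM1]) (hM t htm) hxu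
    have hztpos : (0:ℝ) < z - t := sub_pos.2 htz
    have hMVT : quad (P z) x - quad (P t) x = (z - t) * quad (G ξ) x := by
      rw [hξ]
      field_simp
    have final : (z - t) * (-(2*C*|lam (P t)|) - ε₀/2) - δ₁ < lam (P z) - lam (P t) := by
      have h19 : (z - t) * (-(2*C*|lam (P t)|) - ε₀/2) ≤ (z - t) * quad (G ξ) x :=
        mul_le_mul_of_nonneg_left hGlow hztpos.le
      have h20 : quad (P z) x - δ₁ < lam (P z) := by linarith [hvlt]
      linarith only [h19, h20, hMVT, hquadt]
    rw [div_lt_iff₀ hztpos]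
    have hδ₁eq : δ₁ = (z - t) * (ε₀/4) := by simp only [hδ₁]; ring
    have hfin2 : (z - t) * (-(2*C*|lam (P t)|) - ε₀/2) - (z-t)*(ε₀/4) <
        lam (P z) - lam (P t) := by linarith only [final, hδ₁eq]
    have := arith7 hztpos hε₀pos hfin2
    calc lam (P t) - lam (P z) = -(lam (P z) - lam (P t)) := by ring
    _ < (z-t)*(2*C*|lam (P t)| + ε₀) := this
    _ = r * (z-t) := by rw [hε₀]; ring
  -- comparison with the exponential barrier
  have hcomp : ∀ ε : ℝ, 0 < ε → ∀ t ∈ Set.Icc t₀ T,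
      -lam (P t) ≤ ε * Real.exp (K * (t - t₀)) := by
    intro ε hε
    have hB' : ∀ s : ℝ, HasDerivAt (fun u => ε * Real.exp (K * (u - t₀)))
        (ε * (K * Real.exp (K * (s - t₀)))) s := by
      intro s
      have h1 : HasDerivAt (fun u : ℝ => K * (u - t₀)) K s := by
        simpa using ((hasDerivAt_id s).sub_const t₀).const_mul K
      have h2 := h1.exp
      have h3 := h2.const_mul ε
      rw [show ε * (K * Real.exp (K * (s - t₀))) = ε * (Real.exp (K * (s - t₀)) * K) by ring]
      exact h3
    have ha : -lam (P t₀) ≤ ε * Real.exp (K * (t₀ - t₀)) := by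
      have h4 : 0 ≤ lam (P t₀) := by
        refine le_lam hn fun x hxu => ?_
        have := h0.dotProduct_mulVec_nonneg x
        rwa [star_trivial] at this
      have h5 : (0:ℝ) < ε * Real.exp (K * (t₀ - t₀)) := by positivity
      linarith only [h4, h5]
    have hf' : ∀ s ∈ Set.Ico t₀ T, ∀ r, 2*C*|lam (P s)| < r →
        ∃ᶠ z in nhdsWithin s (Set.Ioi s), slope (fun u => -lam (P u)) s z < r := by
      intro s hs r hr
      refine (hslope s hs r hr).mono fun z hz => ?_
      rw [slope_def_field]
      have he : -lam (P z) - -lam (P s) = lam (P s) - lam (P z) := by ring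
      rw [he]
      exact hz
    have key := image_le_of_liminf_slope_right_lt_deriv_boundary
      (f := fun s => -lam (P s)) (f' := fun s => 2*C*|lam (P s)|)
      hlam_cont hf' ha hB' ?_
    · exact fun t htm => key htm
    · intro s hs heq
      have hpos : 0 < ε * Real.exp (K*(s - t₀)) := by positivity
      have hlneg : lam (P s) < 0 := by
        linarith only [heq, hpos]
      have habs : |lam (P s)| = ε * Real.exp (K*(s - t₀)) := by
        rw [abs_of_neg hlneg]
        linarith only [heq]
      show 2*C*|lam (P s)| < ε * (K * Real.exp (K*(s - t₀)))
      rw [habs, hK]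
      nlinarith only [hpos]
  -- conclusion
  intro t htm
  have hlam0 : 0 ≤ lam (P t) := by
    by_contra hneg
    push_neg at hneg
    set ε := (-lam (P t)) / (2 * Real.exp (K * (T - t₀))) with hε
    have hεpos : 0 < ε := by
      have hml : 0 < -lam (P t) := by linarith only [hneg]
      positivity
    have h6 := hcomp ε hεpos t htm
    have h7 : Real.exp (K * (t - t₀)) ≤ Real.exp (K * (T - t₀)) := by
      apply Real.exp_le_exp.2
      have h7a := htm.2
      nlinarith only [h7a, hKpos]
    have h8 : ε * Real.exp (K * (t - t₀)) ≤ ε * Real.exp (K * (T - t₀)) :=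
      mul_le_mul_of_nonneg_left h7 hεpos.le
    have h9 : ε * Real.exp (K * (T - t₀)) = -lam (P t) / 2 := by
      rw [hε]; field_simp
    rw [h9] at h8
    linarith only [h6, h8, hneg]
  refine PosSemidef.of_dotProduct_mulVec_nonneg ?_ ?_
  · rw [Matrix.IsHermitian, conjTranspose_eq_transpose_of_trivial]
    exact hsymm t htm
  · intro x
    rw [star_trivial]
    have h10 := lam_mul_le_quad hn (by linarith only [hM1] : (0:ℝ) ≤ M) (hM t htm) x
    have h11 : 0 ≤ lam (P t) * (x ⬝ᵥ x) := mul_nonneg hlam0 (dot_self_nonneg x)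
    show (0:ℝ) ≤ x ⬝ᵥ (P t *ᵥ x)
    exact le_trans h11 h10
end

section
/- For a Gaussian random variable z ~ N(μ, σ²) in ℝ and the one-sided truncation event {z ≤ c} with P(z ≤ c) > 0, the truncated variance Var(z | z ≤ c) is strictly less than σ². -/
/-!
Integration by parts against the Gaussian density `φ`, using `φ' = -((x - μ) / v) φ`, gives the
truncated moments of `z - μ` on `{z ≤ c}`: the first is `m = -v φ(c) / P(z ≤ c) < 0`, and the second
is `v + (c - μ) m`. Hence the truncated variance is `v + m (c - E[z | z ≤ c])`, and the second
factor is positive because `z < c` almost surely on `{z ≤ c}`.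
-/

open MeasureTheory ProbabilityTheory Real Set
open scoped ENNReal NNReal

namespace ProbabilityTheory

lemma hasDerivAt_gaussianPDFReal (μ : ℝ) (v : ℝ≥0) (x : ℝ) :
    HasDerivAt (gaussianPDFReal μ v) (-((x - μ) / v) * gaussianPDFReal μ v x) x := by
  have h : HasDerivAt (fun x ↦ -(x - μ) ^ 2 / (2 * v)) (-(2 * (x - μ)) / (2 * v)) x := by
    simpa using (((hasDerivAt_id x).sub_const μ).pow 2).neg.div_const (2 * (v : ℝ))
  rw [gaussianPDFReal_def]
  refine (h.exp.const_mul _).congr_deriv ?_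
  ring

lemma integrable_sub_pow_mul_gaussianPDFReal (μ : ℝ) (v : ℝ≥0) (n : ℕ) :
    Integrable fun x ↦ (x - μ) ^ n * gaussianPDFReal μ v x := by
  rcases eq_or_ne v 0 with rfl | hv
  · simp [gaussianPDFReal_zero_var]
  have hb : 0 < (2 * (v : ℝ))⁻¹ := by positivity
  have h := ((integrable_rpow_mul_exp_neg_mul_sq hb (s := n)
    (neg_one_lt_zero.trans_le n.cast_nonneg)).comp_sub_right μ).const_mul (√(2 * π * v))⁻¹
  refine h.congr (ae_of_all _ fun x ↦ ?_)
  simp only [gaussianPDFReal, rpow_natCast]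
  ring_nf

lemma setIntegral_Iic_sub_pow_succ_mul_gaussianPDFReal (μ : ℝ) (v : ℝ≥0) (c : ℝ) (n : ℕ) :
    ∫ x in Iic c, (x - μ) ^ (n + 1) * gaussianPDFReal μ v x =
      v * (n * (∫ x in Iic c, (x - μ) ^ (n - 1) * gaussianPDFReal μ v x)
        - (c - μ) ^ n * gaussianPDFReal μ v c) := by
  rcases eq_or_ne v 0 with rfl | hv
  · simp [gaussianPDFReal_zero_var]
  set F : ℝ → ℝ := fun x ↦ -(v * ((x - μ) ^ n * gaussianPDFReal μ v x))
  set F' : ℝ → ℝ := fun x ↦ (x - μ) ^ (n + 1) * gaussianPDFReal μ v x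
    - v * (n * ((x - μ) ^ (n - 1) * gaussianPDFReal μ v x))
  have hF : ∀ x ∈ Iic c, HasDerivAt F (F' x) x := fun x _ ↦ by
    refine ((((hasDerivAt_id x).sub_const μ).pow n).mul
      (hasDerivAt_gaussianPDFReal μ v x)).const_mul (v : ℝ) |>.neg.congr_deriv ?_
    have : (v : ℝ) ≠ 0 := by exact_mod_cast hv
    simp only [F', id, Pi.pow_apply]
    field_simp
    ring
  have hF'int : IntegrableOn F' (Iic c) :=
    ((integrable_sub_pow_mul_gaussianPDFReal μ v _).sub
      (((integrable_sub_pow_mul_gaussianPDFReal μ v _).const_mul _).const_mul _)).integrableOn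
  have hFint : IntegrableOn F (Iic c) :=
    ((integrable_sub_pow_mul_gaussianPDFReal μ v n).const_mul _).neg.integrableOn
  have hFTC := integral_Iic_of_hasDerivAt_of_tendsto' hF hF'int
    (tendsto_zero_of_hasDerivAt_of_integrableOn_Iic hF hF'int hFint)
  rw [integral_sub, integral_const_mul, integral_const_mul] at hFTC
  · simp only [F] at hFTC
    linear_combination hFTC
  · exact (integrable_sub_pow_mul_gaussianPDFReal μ v _).integrableOn
  · exact (((integrable_sub_pow_mul_gaussianPDFReal μ v _).const_mul _).const_mul _).integrableOn

lemma integral_cond {Ω E : Type*} [MeasurableSpace Ω] [NormedAddCommGroup E] [NormedSpace ℝ E]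
    (μ : Measure Ω) (s : Set Ω) (f : Ω → E) :
    ∫ ω, f ω ∂μ[|s] = (μ s).toReal⁻¹ • ∫ ω in s, f ω ∂μ := by
  rw [cond, integral_smul_measure, ENNReal.toReal_inv]

lemma _root_.MeasureTheory.MemLp.cond {Ω E : Type*} [MeasurableSpace Ω] [NormedAddCommGroup E]
    {μ : Measure Ω} {p : ℝ≥0∞} {f : Ω → E} (hf : MemLp f p μ) (s : Set Ω) : MemLp f p μ[|s] := by
  rcases eq_or_ne (μ s) 0 with hs | hs
  · simp [ProbabilityTheory.cond, Measure.restrict_eq_zero.2 hs]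
  · exact (hf.restrict s).smul_measure (ENNReal.inv_ne_top.2 hs)

lemma integral_cond_Iic_lt {ν : Measure ℝ} [NullSingletonClass ν] {c : ℝ} (h0 : ν (Iic c) ≠ 0)
    (htop : ν (Iic c) ≠ ∞) (hint : Integrable (fun z ↦ z) ν[|Iic c]) : ∫ z, z ∂ν[|Iic c] < c := by
  have := cond_isProbabilityMeasure_of_finite h0 htop
  have hc : ν[|Iic c] {c} = 0 := cond_absolutelyContinuous (measure_singleton c)
  have hpos : 0 < ∫ z, (c - z) ∂ν[|Iic c] := by
    rw [integral_pos_iff_support_of_nonneg_ae]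
    · have : Function.support (fun z : ℝ ↦ c - z) = {c}ᶜ := by ext; simp [sub_eq_zero, eq_comm]
      rw [this, measure_compl (measurableSet_singleton c) (measure_ne_top _ _), hc]
      simp
    · filter_upwards [ae_cond_mem measurableSet_Iic] with z hz
      simpa using hz
    · exact (integrable_const c).sub hint
  rw [integral_sub (integrable_const c) hint, integral_const] at hpos
  simp only [probReal_univ, smul_eq_mul, one_mul] at hpos
  linarith

lemma setIntegral_Iic_gaussianPDFReal_pos (μ : ℝ) {v : ℝ≥0} (hv : v ≠ 0) (c : ℝ) :
    0 < ∫ x in Iic c, gaussianPDFReal μ v x := by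
  rw [setIntegral_pos_iff_support_of_nonneg_ae (ae_of_all _ (gaussianPDFReal_nonneg μ v))
    (integrable_gaussianPDFReal μ v).integrableOn]
  have : Function.support (gaussianPDFReal μ v) = univ :=
    Function.support_eq_univ fun x ↦ (gaussianPDFReal_pos μ v x hv).ne'
  simp [this]

lemma integral_cond_Iic_gaussianReal (μ : ℝ) {v : ℝ≥0} (hv : v ≠ 0) (c : ℝ) (f : ℝ → ℝ) :
    ∫ z, f z ∂(gaussianReal μ v)[|Iic c] =
      (∫ x in Iic c, f x * gaussianPDFReal μ v x) / ∫ x in Iic c, gaussianPDFReal μ v x := by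
  rw [integral_cond, gaussianReal_apply_eq_integral μ hv, ENNReal.toReal_ofReal
    (setIntegral_nonneg measurableSet_Iic fun x _ ↦ gaussianPDFReal_nonneg μ v x),
    gaussianReal_of_var_ne_zero μ hv, setIntegral_withDensity_eq_setIntegral_toReal_smul
    (measurable_gaussianPDF μ v) (ae_of_all _ fun _ ↦ gaussianPDF_lt_top) _ measurableSet_Iic]
  simp [toReal_gaussianPDF, mul_comm, div_eq_inv_mul]

lemma integral_sub_cond_Iic_gaussianReal (μ : ℝ) {v : ℝ≥0} (hv : v ≠ 0) (c : ℝ) :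
    ∫ z, (z - μ) ∂(gaussianReal μ v)[|Iic c] =
      -(v * gaussianPDFReal μ v c) / ∫ x in Iic c, gaussianPDFReal μ v x := by
  have h := setIntegral_Iic_sub_pow_succ_mul_gaussianPDFReal μ v c 0
  simp only [zero_add, pow_one, CharP.cast_eq_zero, zero_mul, pow_zero, one_mul, zero_sub] at h
  rw [integral_cond_Iic_gaussianReal μ hv, h, mul_neg]

lemma integral_sub_sq_cond_Iic_gaussianReal (μ : ℝ) {v : ℝ≥0} (hv : v ≠ 0) (c : ℝ) :
    ∫ z, (z - μ) ^ 2 ∂(gaussianReal μ v)[|Iic c] =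
      v + (c - μ) * ∫ z, (z - μ) ∂(gaussianReal μ v)[|Iic c] := by
  have h := setIntegral_Iic_sub_pow_succ_mul_gaussianPDFReal μ v c 1
  simp only [Nat.reduceAdd, Nat.cast_one, one_mul, tsub_self, pow_zero, pow_one] at h
  have hP := (setIntegral_Iic_gaussianPDFReal_pos μ hv c).ne'
  rw [integral_cond_Iic_gaussianReal μ hv, h, integral_sub_cond_Iic_gaussianReal μ hv]
  field_simp
  ring

lemma integral_sq_sub_sq_integral_eq_of_sub_const {Ω : Type*} [MeasurableSpace Ω]
    {ν : Measure Ω} [IsProbabilityMeasure ν] {X : Ω → ℝ} (hX : MemLp X 2 ν) (a : ℝ) :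
    ∫ ω, X ω ^ 2 ∂ν - (∫ ω, X ω ∂ν) ^ 2 = ∫ ω, (X ω - a) ^ 2 ∂ν - (∫ ω, (X ω - a) ∂ν) ^ 2 := by
  have h := variance_sub_const hX.aestronglyMeasurable a
  rw [variance_eq_sub hX, variance_eq_sub (X := fun ω ↦ X ω - a) (hX.sub (memLp_const a))] at h
  simpa using h.symm

end ProbabilityTheory

theorem stmt11_general (μ σ c : ℝ) (hσ : 0 < σ) (v : NNReal) (hv : (v : ℝ) = σ ^ 2) :
    (∫ z, z ^ 2 ∂((gaussianReal μ v)[|Set.Iic c])) -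
      (∫ z, z ∂((gaussianReal μ v)[|Set.Iic c])) ^ 2 < σ ^ 2 := by
  have hv0 : v ≠ 0 := by rw [← NNReal.coe_ne_zero, hv]; positivity
  have hIic : gaussianReal μ v (Iic c) ≠ 0 := by
    rw [gaussianReal_apply_eq_integral μ hv0]
    exact (ENNReal.ofReal_pos.2 (setIntegral_Iic_gaussianPDFReal_pos μ hv0 c)).ne'
  have := cond_isProbabilityMeasure (s := Iic c) hIic
  have := nullSingletonClass_gaussianReal (μ := μ) hv0
  have hX : MemLp (fun z ↦ z) 2 (gaussianReal μ v)[|Iic c] := (memLp_id_gaussianReal 2).cond _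
  have hint := hX.integrable one_le_two
  have hmean : ∫ z, (z - μ) ∂(gaussianReal μ v)[|Iic c] =
      ∫ z, z ∂(gaussianReal μ v)[|Iic c] - μ := by
    rw [integral_sub hint (integrable_const μ)]
    simp
  have hneg : ∫ z, (z - μ) ∂(gaussianReal μ v)[|Iic c] < 0 := by
    rw [integral_sub_cond_Iic_gaussianReal μ hv0]
    exact div_neg_of_neg_of_pos (neg_neg_of_pos (mul_pos (by positivity)
      (gaussianPDFReal_pos μ v c hv0))) (setIntegral_Iic_gaussianPDFReal_pos μ hv0 c)
  have hlt := integral_cond_Iic_lt hIic (measure_ne_top _ _) hint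
  rw [integral_sq_sub_sq_integral_eq_of_sub_const hX μ, integral_sub_sq_cond_Iic_gaussianReal μ hv0,
    ← hv]
  set m := ∫ z, (z - μ) ∂(gaussianReal μ v)[|Iic c]
  have : m * (c - μ - m) < 0 := mul_neg_of_neg_of_pos hneg (by linarith)
  linarith

theorem stmt11 (μ σ c : ℝ) (hσ : 0 < σ) (v : NNReal) (hv : (v : ℝ) = σ ^ 2)
    (hpos : 0 < (gaussianReal μ v) (Set.Iic c)) :
    (∫ z, z ^ 2 ∂((gaussianReal μ v)[|Set.Iic c])) -
      (∫ z, z ∂((gaussianReal μ v)[|Set.Iic c])) ^ 2 < σ ^ 2 :=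
  stmt11_general μ σ c hσ v hv
end
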